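/- arXiv:0901.0203 — 2 statements merged into one kernel-verified Lean document; each statement's English description precedes it below -/
import Mathlib

section
/- In GL(6,ℤ) one has (M_X M_Y M_Z)⁴ = g₃ = (M_Z M_X M_Z M_Y)², and this element is not the identity and has order 2; consequently M_X M_Y M_Z has order 8 in G. (This corrects the earlier claim that (XYZ)⁴ = 1 in the duality group of triple vector bundles.) -/
open Matrix

/-- The matrix of the dualization functor `X` acting on `(γ,β,α,λ,μ,ν)`. -/
def MXmat : Matrix (Fin 6) (Fin 6) ℤ :=
  !![0,0,0,0,-1,0; 0,0,0,0,0,-1; 0,0,1,0,0,0; 0,0,0,-1,0,0; -1,0,0,0,0,0; 0,-1,0,0,0,0]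

/-- The matrix of the dualization functor `Y`. -/
def MYmat : Matrix (Fin 6) (Fin 6) ℤ :=
  !![0,0,0,-1,0,0; 0,1,0,0,0,0; 0,0,0,0,0,-1; -1,0,0,0,0,0; 0,0,0,0,-1,0; 0,0,-1,0,0,0]

/-- The matrix of the dualization functor `Z`. -/
def MZmat : Matrix (Fin 6) (Fin 6) ℤ :=
  !![1,0,0,0,0,0; 0,0,0,-1,0,0; 0,0,0,0,-1,0; 0,-1,0,0,0,0; 0,0,-1,0,0,0; 0,0,0,0,0,-1]

/-- `M_X` as an element of `GL(6,ℤ)` (it is an involution, so it is its own inverse). -/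
def MX : GL (Fin 6) ℤ := ⟨MXmat, MXmat, by decide, by decide⟩

/-- `M_Y` as an element of `GL(6,ℤ)`. -/
def MY : GL (Fin 6) ℤ := ⟨MYmat, MYmat, by decide, by decide⟩

/-- `M_Z` as an element of `GL(6,ℤ)`. -/
def MZ : GL (Fin 6) ℤ := ⟨MZmat, MZmat, by decide, by decide⟩

/-- The subgroup of `GL(6,ℤ)` generated by `M_X`, `M_Y`, `M_Z`: a faithful model of the
duality group `DF₃` of triple vector bundles. -/
def G : Subgroup (GL (Fin 6) ℤ) := Subgroup.closure {MX, MY, MZ}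

lemma hMX : MX ∈ G := Subgroup.subset_closure (by simp)
lemma hMY : MY ∈ G := Subgroup.subset_closure (by simp)
lemma hMZ : MZ ∈ G := Subgroup.subset_closure (by simp)

def g₁ : GL (Fin 6) ℤ := (MX * MY * MX * MZ) ^ 2
def g₂ : GL (Fin 6) ℤ := (MY * MZ * MY * MX) ^ 2
def g₃ : GL (Fin 6) ℤ := (MZ * MX * MZ * MY) ^ 2

lemma hg₁ : g₁ ∈ G :=
  G.pow_mem (G.mul_mem (G.mul_mem (G.mul_mem hMX hMY) hMX) hMZ) 2
lemma hg₂ : g₂ ∈ G :=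
  G.pow_mem (G.mul_mem (G.mul_mem (G.mul_mem hMY hMZ) hMY) hMX) 2
lemma hg₃ : g₃ ∈ G :=
  G.pow_mem (G.mul_mem (G.mul_mem (G.mul_mem hMZ hMX) hMZ) hMY) 2

theorem orderOf_eq_prime_pow_succ_of_orderOf_pow {M : Type*} [Monoid M] {p : ℕ} [Fact p.Prime]
    {x : M} {n : ℕ} (h : orderOf (x ^ p ^ n) = p) : orderOf x = p ^ (n + 1) := by
  obtain ⟨hp, hne⟩ := orderOf_eq_prime_iff.mp h
  exact orderOf_eq_prime_pow hne (by rw [pow_succ, pow_mul, hp])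

theorem coe_g₃ : (g₃ : Matrix (Fin 6) (Fin 6) ℤ) = diagonal ![-1, 1, -1, -1, 1, -1] := by
  show (MZmat * MXmat * MZmat * MYmat) ^ 2 = _
  decide

theorem pow_four_MX_mul_MY_mul_MZ : (MX * MY * MZ) ^ 4 = g₃ :=
  Units.ext <| show (MXmat * MYmat * MZmat) ^ 4 = (MZmat * MXmat * MZmat * MYmat) ^ 2 by decide

theorem g₃_sq : g₃ ^ 2 = 1 := by
  refine Units.ext ?_
  rw [Units.val_pow_eq_pow_val, coe_g₃, diagonal_pow, Units.val_one, ← diagonal_one]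
  congr 1
  decide

theorem g₃_ne_one : g₃ ≠ 1 := fun h => by
  simpa [coe_g₃] using congrArg (fun g : GL (Fin 6) ℤ => (g : Matrix (Fin 6) (Fin 6) ℤ) 0 0) h

theorem orderOf_g₃ : orderOf g₃ = 2 :=
  orderOf_eq_prime g₃_sq g₃_ne_one

/-- `(M_X M_Y M_Z)⁴ = g₃ = (M_Z M_X M_Z M_Y)²`; this element is not the identity and has
order 2; consequently `M_X M_Y M_Z` has order 8. (This corrects the earlier claim that
`(XYZ)⁴ = 1` in the duality group of triple vector bundles.) -/
theorem stmt_7 :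
    (MX * MY * MZ) ^ 4 = g₃ ∧ g₃ = (MZ * MX * MZ * MY) ^ 2 ∧
    g₃ ≠ 1 ∧ orderOf g₃ = 2 ∧ orderOf (MX * MY * MZ) = 8 := by
  refine ⟨pow_four_MX_mul_MY_mul_MZ, rfl, g₃_ne_one, orderOf_g₃, ?_⟩
  apply orderOf_eq_prime_pow_succ_of_orderOf_pow (p := 2) (n := 2)
  rw [show 2 ^ 2 = 4 from rfl, pow_four_MX_mul_MY_mul_MZ, orderOf_g₃]
end

section
/- Let H be the subgroup of G generated by a := (M_Z M_X M_Y)² and b := (M_X M_Y M_Z)², and let K be the subgroup of G generated by M_X and M_Y. Then H is normal in G, K is isomorphic to the symmetric group S₃, H ∩ K is trivial, and H·K = G; consequently G is an internal semidirect product of H by K, i.e. G ≅ (ℤ/4 × ℤ/4) ⋊ S₃. -/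
open Matrix

open Pointwise

def a : GL (Fin 6) ℤ := (MZ * MX * MY) ^ 2
def b : GL (Fin 6) ℤ := (MX * MY * MZ) ^ 2

/-- The subgroup `H` generated by `a`, `b` and the subgroup `K` generated by `M_X`, `M_Y`. -/
def H : Subgroup (GL (Fin 6) ℤ) := Subgroup.closure {a, b}
def K : Subgroup (GL (Fin 6) ℤ) := Subgroup.closure {MX, MY}

/-!
The elements `a` and `b` commute, have order 4 and generate `H ≅ (ℤ/4)²`. Conjugation by `M_X`,
`M_Y`, `M_Z` permutes `a`, `b`, `(a * b)⁻¹`, so `G` normalizes `H`; since moreover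
`M_Z = a³ b · M_X M_Y M_X`, we get `G = H ⊔ K`. The assignment `(0 1) ↦ M_X`, `(1 2) ↦ M_Y` extends
to a faithful representation of `S₃` with image `K`, and `H ∩ K = 1` is a finite check. Hence `G`
is the internal semidirect product `H ⋊ K ≅ (ℤ/4)² ⋊ S₃`.
-/

namespace Subgroup

variable {G : Type*} [Group G]

theorem mem_normalizer_closure_of_mul_self_eq_one {s : G} {T : Set G} (hs : s * s = 1)
    (hT : ∀ t ∈ T, s * t * s⁻¹ ∈ closure T) : s ∈ normalizer (closure T) := by
  have hconj : ∀ x ∈ closure T, s * x * s⁻¹ ∈ closure T := fun x hx ↦ by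
    refine closure_induction (fun t ht ↦ hT t ht) (by simp) (fun x y _ _ hx hy ↦ ?_)
      (fun x _ hx ↦ ?_) hx
    · simpa [mul_assoc] using mul_mem hx hy
    · simpa [mul_assoc] using inv_mem hx
  have hs' : s⁻¹ = s := inv_eq_of_mul_eq_one_right hs
  refine mem_normalizer_iff.2 fun x ↦ ⟨hconj x, fun hx ↦ ?_⟩
  simpa [hs', ← mul_assoc, hs, mul_assoc _ s s] using hconj _ hx

theorem isCompl_subgroupOf {H K L : Subgroup G} (hinf : H ⊓ K = ⊥) (hsup : H ⊔ K = L) :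
    IsCompl (H.subgroupOf L) (K.subgroupOf L) where
  disjoint := disjoint_def.2 fun hH hK ↦
    Subtype.ext (mem_bot.1 (hinf ▸ mem_inf.2 ⟨hH, hK⟩ : _ ∈ (⊥ : Subgroup G)))
  codisjoint := hsup ▸ codisjoint_subgroupOf_sup H K

theorem isComplement'_of_isCompl {H K : Subgroup G} [H.Normal] (h : IsCompl H K) :
    H.IsComplement' K :=
  isComplement'_of_disjoint_and_mul_eq_univ h.disjoint <| by
    rw [← normal_mul, h.sup_eq_top, coe_top]

end Subgroup

section CommutingPair

variable {n : ℕ} [NeZero n]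

section Monoid

variable {M : Type*} [Monoid M] {x y : M}

def zmodPairHom (hxy : Commute x y) (hx : x ^ n = 1) (hy : y ^ n = 1) :
    Multiplicative (ZMod n) × Multiplicative (ZMod n) →* M where
  toFun q := x ^ q.1.toAdd.val * y ^ q.2.toAdd.val
  map_one' := by simp
  map_mul' q r := by
    simp only [Prod.fst_mul, Prod.snd_mul, toAdd_mul, ZMod.val_add, ← pow_eq_pow_mod _ hx,
      ← pow_eq_pow_mod _ hy, pow_add]
    exact (hxy.pow_pow _ _).mul_mul_mul_comm _ _

theorem zmodPairHom_apply (hxy : Commute x y) (hx : x ^ n = 1) (hy : y ^ n = 1)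
    (q : Multiplicative (ZMod n) × Multiplicative (ZMod n)) :
    zmodPairHom hxy hx hy q = x ^ q.1.toAdd.val * y ^ q.2.toAdd.val := rfl

end Monoid

theorem range_zmodPairHom {M : Type*} [Group M] {x y : M} (hxy : Commute x y) (hx : x ^ n = 1)
    (hy : y ^ n = 1) : (zmodPairHom hxy hx hy).range = Subgroup.closure {x, y} := by
  refine le_antisymm ?_ ((Subgroup.closure_le _).2 ?_)
  · rintro _ ⟨q, rfl⟩
    exact Subgroup.mul_mem _ (Subgroup.pow_mem _ (Subgroup.subset_closure (by simp)) _)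
      (Subgroup.pow_mem _ (Subgroup.subset_closure (by simp)) _)
  · have hval : (1 : ZMod n).val = 1 % n := ZMod.val_one_eq_one_mod n
    rintro _ (rfl | rfl)
    · refine ⟨(Multiplicative.ofAdd 1, 1), ?_⟩
      simp [zmodPairHom_apply, hval, ← pow_eq_pow_mod _ hx]
    · refine ⟨(1, Multiplicative.ofAdd 1), ?_⟩
      simp [zmodPairHom_apply, hval, ← pow_eq_pow_mod _ hy]

end CommutingPair

theorem Equiv.Perm.closure_swap_zero_one_swap_one_two :
    Subgroup.closure {swap (0 : Fin 3) 1, swap 1 2} = ⊤ := by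
  rw [← Subgroup.closure_eq_top_of_mclosure_eq_top (mclosure_swap_castSucc_succ 2)]
  congr 1
  ext σ
  simp [Fin.exists_fin_two, eq_comm]

theorem MX_mul_self : MX * MX = 1 := by decide
theorem MY_mul_self : MY * MY = 1 := by decide
theorem MZ_mul_self : MZ * MZ = 1 := by decide

theorem commute_a_b : Commute a b := by unfold Commute SemiconjBy; decide
theorem a_pow_four : a ^ 4 = 1 := by decide
theorem b_pow_four : b ^ 4 = 1 := by decide

theorem MX_conj_a : MX * a * MX⁻¹ = a := by decide
theorem MX_conj_b : MX * b * MX⁻¹ = (a * b)⁻¹ := by decide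
theorem MY_conj_a : MY * a * MY⁻¹ = (a * b)⁻¹ := by decide
theorem MY_conj_b : MY * b * MY⁻¹ = b := by decide
theorem MZ_conj_a : MZ * a * MZ⁻¹ = b := by decide
theorem MZ_conj_b : MZ * b * MZ⁻¹ = a := by decide

theorem MZ_eq : MZ = a ^ 3 * b * (MX * MY * MX) := by decide

theorem H_le_G : H ≤ G := by
  refine (Subgroup.closure_le G).2 ?_
  rintro _ (rfl | rfl)
  · exact G.pow_mem (G.mul_mem (G.mul_mem hMZ hMX) hMY) 2
  · exact G.pow_mem (G.mul_mem (G.mul_mem hMX hMY) hMZ) 2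

theorem K_le_G : K ≤ G := by
  refine (Subgroup.closure_le G).2 ?_
  rintro _ (rfl | rfl)
  exacts [hMX, hMY]

theorem G_le_normalizer_H : G ≤ Subgroup.normalizer (H : Set (GL (Fin 6) ℤ)) := by
  have ha : a ∈ H := Subgroup.subset_closure (by simp)
  have hb : b ∈ H := Subgroup.subset_closure (by simp)
  have hab : (a * b)⁻¹ ∈ H := H.inv_mem (H.mul_mem ha hb)
  refine (Subgroup.closure_le _).2 ?_
  rintro _ (rfl | rfl | rfl)
  · refine Subgroup.mem_normalizer_closure_of_mul_self_eq_one MX_mul_self ?_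
    rintro _ (rfl | rfl)
    exacts [by rw [MX_conj_a]; exact ha, by rw [MX_conj_b]; exact hab]
  · refine Subgroup.mem_normalizer_closure_of_mul_self_eq_one MY_mul_self ?_
    rintro _ (rfl | rfl)
    exacts [by rw [MY_conj_a]; exact hab, by rw [MY_conj_b]; exact hb]
  · refine Subgroup.mem_normalizer_closure_of_mul_self_eq_one MZ_mul_self ?_
    rintro _ (rfl | rfl)
    exacts [by rw [MZ_conj_a]; exact hb, by rw [MZ_conj_b]; exact ha]

theorem H_sup_K : H ⊔ K = G := by
  refine le_antisymm (sup_le H_le_G K_le_G) ((Subgroup.closure_le _).2 ?_)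
  have hX : MX ∈ K := Subgroup.subset_closure (by simp)
  have hY : MY ∈ K := Subgroup.subset_closure (by simp)
  rintro _ (rfl | rfl | rfl)
  · exact Subgroup.mem_sup_right hX
  · exact Subgroup.mem_sup_right hY
  · rw [MZ_eq]
    refine Subgroup.mul_mem_sup (H.mul_mem (H.pow_mem ?_ 3) ?_) (K.mul_mem (K.mul_mem hX hY) hX)
    exacts [Subgroup.subset_closure (by simp), Subgroup.subset_closure (by simp)]

def abHom : Multiplicative (ZMod 4) × Multiplicative (ZMod 4) →* GL (Fin 6) ℤ :=
  zmodPairHom commute_a_b a_pow_four b_pow_four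

theorem abHom_injective : Function.Injective abHom :=
  (injective_iff_map_eq_one abHom).2 (by decide)

theorem range_abHom : abHom.range = H := range_zmodPairHom _ _ _

def permRep : Equiv.Perm (Fin 3) →* GL (Fin 6) ℤ :=
  MonoidHom.mk' (fun σ ↦
    if σ = 1 then 1 else if σ = .swap 0 1 then MX else if σ = .swap 1 2 then MY
    else if σ = .swap 0 1 * .swap 1 2 then MX * MY else if σ = .swap 1 2 * .swap 0 1 then MY * MX
    else MX * MY * MX) (by decide)

theorem permRep_injective : Function.Injective permRep :=
  (injective_iff_map_eq_one permRep).2 (by decide)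

theorem range_permRep : permRep.range = K := by
  rw [MonoidHom.range_eq_map, ← Equiv.Perm.closure_swap_zero_one_swap_one_two,
    MonoidHom.map_closure, Set.image_pair]
  rfl

theorem eq_one_of_abHom_eq_permRep : ∀ q σ, abHom q = permRep σ → σ = 1 := by decide

theorem H_inf_K : H ⊓ K = ⊥ := by
  refine eq_bot_iff.2 fun x hx ↦ ?_
  obtain ⟨⟨q, rfl⟩, ⟨σ, hσ⟩⟩ : x ∈ abHom.range ∧ x ∈ permRep.range := by
    rwa [range_abHom, range_permRep]
  rw [← hσ, eq_one_of_abHom_eq_permRep q σ hσ.symm, map_one]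
  exact one_mem _

/-- `H` is normal in `G`, `K ≅ S₃`, `H ∩ K` is trivial and `H·K = G`; consequently `G` is an
internal semidirect product of `H` by `K`, i.e. `G ≅ (ℤ/4 × ℤ/4) ⋊ S₃`. -/
theorem stmt_11 :
    (H.subgroupOf G).Normal ∧
    Nonempty (K ≃* Equiv.Perm (Fin 3)) ∧
    H ⊓ K = ⊥ ∧
    (H : Set (GL (Fin 6) ℤ)) * (K : Set (GL (Fin 6) ℤ)) = (G : Set (GL (Fin 6) ℤ)) ∧
    ∃ φ : Equiv.Perm (Fin 3) →* MulAut (Multiplicative (ZMod 4) × Multiplicative (ZMod 4)),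
      Nonempty (G ≃* (Multiplicative (ZMod 4) × Multiplicative (ZMod 4)) ⋊[φ] Equiv.Perm (Fin 3)) := by
  have hnormal : (H.subgroupOf G).Normal :=
    (Subgroup.normal_subgroupOf_iff_le_normalizer H_le_G).2 G_le_normalizer_H
  let eH : Multiplicative (ZMod 4) × Multiplicative (ZMod 4) ≃* H :=
    (MonoidHom.ofInjective abHom_injective).trans (MulEquiv.subgroupCongr range_abHom)
  let eK : Equiv.Perm (Fin 3) ≃* K :=
    (MonoidHom.ofInjective permRep_injective).trans (MulEquiv.subgroupCongr range_permRep)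
  have hcompl : (H.subgroupOf G).IsComplement' (K.subgroupOf G) :=
    Subgroup.isComplement'_of_isCompl (Subgroup.isCompl_subgroupOf H_inf_K H_sup_K)
  refine ⟨hnormal, ⟨eK.symm⟩, H_inf_K, ?_, _,
    ⟨(SemidirectProduct.mulEquivSubgroup hcompl).symm.trans <|
      SemidirectProduct.congr' ((Subgroup.subgroupOfEquivOfLe H_le_G).trans eH.symm)
        ((Subgroup.subgroupOfEquivOfLe K_le_G).trans eK.symm)⟩⟩
  rw [← Subgroup.coe_mul_of_right_le_normalizer_left H K (K_le_G.trans G_le_normalizer_H),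
    H_sup_K]
end
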